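/- Let S, T be bounded operators on a complex Hilbert space with S = TW for some unitary W, and let T = U − V be a proper splitting of T. Then S = UW − VW is a proper splitting of S, (UW)† = W* U†, and ρ((UW)†(VW)) = ρ(U† V); in particular one splitting converges if and only if the other does. -/

import Mathlib

open ContinuousLinearMap

/-- `Td` is the Moore–Penrose inverse of `T`. -/
def IsMoorePenroseInverse {H : Type*} [NormedAddCommGroup H] [InnerProductSpace ℂ H]
    [CompleteSpace H] (T Td : H →L[ℂ] H) : Prop :=
  T ∘L Td ∘L T = T ∧ Td ∘L T ∘L Td = Td ∧
    IsSelfAdjoint (T ∘L Td) ∧ IsSelfAdjoint (Td ∘L T)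

/-! Composing on the right with the surjection `W` preserves ranges, and `ker (A W)` is the
preimage of `ker A` under `W`, so the proper splitting transfers. A right unitary factor moves
into the Moore–Penrose inverse as its adjoint on the left, since `U W (W* U†) = U U†` and
`(W* U†) U W = W* (U† U) W` stay self-adjoint; the inverse is unique, so `(UW)† = W* U†`.
The iteration operator `(UW)† V W = W* (U† V) W` is then unitarily similar to `U† V`, so the
two spectra, and hence the spectral radii, coincide. -/

section StarMonoid

variable {R : Type*} [Monoid R] [StarMul R]

theorem mul_eq_mul_of_penrose {a b c : R} (hb : a * b * a = a) (hab : IsSelfAdjoint (a * b))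
    (hc : a * c * a = a) (hac : IsSelfAdjoint (a * c)) : a * b = a * c :=
  calc a * b = star b * star (a * c * a) := by rw [hc, ← star_mul, hab.star_eq]
    _ = star (a * b) * star (a * c) := by simp only [star_mul, mul_assoc]
    _ = a * c := by rw [hab.star_eq, hac.star_eq, ← mul_assoc, hb]

theorem mul_eq_mul_of_penrose' {a b c : R} (hb : a * b * a = a) (hba : IsSelfAdjoint (b * a))
    (hc : a * c * a = a) (hca : IsSelfAdjoint (c * a)) : b * a = c * a := by
  have key : star a * star b = star a * star c :=
    mul_eq_mul_of_penrose (by rw [← star_mul, ← star_mul, ← mul_assoc, hb])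
      (by rw [← star_mul]; exact IsSelfAdjoint.star_iff.mpr hba)
      (by rw [← star_mul, ← star_mul, ← mul_assoc, hc])
      (by rw [← star_mul]; exact IsSelfAdjoint.star_iff.mpr hca)
  simpa only [← star_mul, star_inj] using key

end StarMonoid

section Operator

variable {H : Type*} [NormedAddCommGroup H] [InnerProductSpace ℂ H] [CompleteSpace H]

theorem isMoorePenroseInverse_iff_mul {T Td : H →L[ℂ] H} :
    IsMoorePenroseInverse T Td ↔ T * Td * T = T ∧ Td * T * Td = Td ∧
      IsSelfAdjoint (T * Td) ∧ IsSelfAdjoint (Td * T) := by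
  simp only [IsMoorePenroseInverse, mul_assoc]
  rfl

theorem IsMoorePenroseInverse.unique {T A B : H →L[ℂ] H} (hA : IsMoorePenroseInverse T A)
    (hB : IsMoorePenroseInverse T B) : A = B := by
  obtain ⟨hA₁, hA₂, hA₃, hA₄⟩ := isMoorePenroseInverse_iff_mul.mp hA
  obtain ⟨hB₁, hB₂, hB₃, hB₄⟩ := isMoorePenroseInverse_iff_mul.mp hB
  calc A = A * (T * A) := by rw [← mul_assoc, hA₂]
    _ = A * T * B := by rw [mul_eq_mul_of_penrose hA₁ hA₃ hB₁ hB₃, mul_assoc]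
    _ = B := by rw [mul_eq_mul_of_penrose' hA₁ hA₄ hB₁ hB₄, hB₂]

theorem IsMoorePenroseInverse.comp_unitary {U Ud W : H →L[ℂ] H}
    (hUd : IsMoorePenroseInverse U Ud) (hW : W ∈ unitary (H →L[ℂ] H)) :
    IsMoorePenroseInverse (U ∘L W) (adjoint W ∘L Ud) := by
  obtain ⟨h₁, h₂, h₃, h₄⟩ := isMoorePenroseInverse_iff_mul.mp hUd
  have hUW : U * W * (star W * Ud) = U * Ud := by
    rw [mul_assoc, ← mul_assoc W, Unitary.mul_star_self_of_mem hW, one_mul]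
  rw [isMoorePenroseInverse_iff_mul, ← star_eq_adjoint, ← mul_def, ← mul_def]
  refine ⟨?_, ?_, ?_, ?_⟩
  · rw [hUW, ← mul_assoc, h₁]
  · rw [mul_assoc, hUW, mul_assoc, ← mul_assoc Ud, h₂]
  · rwa [hUW]
  · simpa only [mul_assoc] using h₄.conjugate' W

end Operator

theorem induced_splitting_unitary_right_general
    {H : Type*} [NormedAddCommGroup H] [InnerProductSpace ℂ H] [CompleteSpace H]
    (S T U V W Ud UWd : H →L[ℂ] H)
    (hW1 : adjoint W ∘L W = 1) (hW2 : W ∘L adjoint W = 1)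
    (hS : S = T ∘L W)
    (hsplit : T = U - V)
    (hran : LinearMap.range (U : H →ₗ[ℂ] H) = LinearMap.range (T : H →ₗ[ℂ] H))
    (hker : LinearMap.ker (U : H →ₗ[ℂ] H) = LinearMap.ker (T : H →ₗ[ℂ] H))
    (hUd : IsMoorePenroseInverse U Ud)
    (hUWd : IsMoorePenroseInverse (U ∘L W) UWd) :
    (S = U ∘L W - V ∘L W ∧
        LinearMap.range ((U ∘L W : H →L[ℂ] H) : H →ₗ[ℂ] H) = LinearMap.range (S : H →ₗ[ℂ] H) ∧
        LinearMap.ker ((U ∘L W : H →L[ℂ] H) : H →ₗ[ℂ] H) = LinearMap.ker (S : H →ₗ[ℂ] H)) ∧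
      UWd = adjoint W ∘L Ud ∧
      spectralRadius ℂ (UWd ∘L (V ∘L W)) = spectralRadius ℂ (Ud ∘L V) := by
  have hW : W ∈ unitary (H →L[ℂ] H) := ⟨hW1, hW2⟩
  have hWtop : LinearMap.range (W : H →ₗ[ℂ] H) = ⊤ :=
    LinearMap.range_eq_top.mpr fun x => ⟨adjoint W x, congr($hW2 x)⟩
  have hUWd_eq : UWd = adjoint W ∘L Ud := hUWd.unique (hUd.comp_unitary hW)
  refine ⟨⟨by rw [hS, hsplit, sub_comp], ?_, ?_⟩, hUWd_eq, ?_⟩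
  · simp only [hS, toLinearMap_comp, LinearMap.range_comp_of_range_eq_top _ hWtop, hran]
  · simp only [hS, toLinearMap_comp, LinearMap.ker_comp, hker]
  · have hspec : spectrum ℂ (UWd ∘L (V ∘L W)) = spectrum ℂ (Ud ∘L V) := by
      have hconj : (adjoint W ∘L Ud) ∘L (V ∘L W) = star W * (Ud * V) * W := by
        simp only [star_eq_adjoint, mul_def, comp_assoc]
      rw [hUWd_eq, hconj]
      exact Unitary.spectrum_star_left_conjugate (U := ⟨W, hW⟩)
    rw [spectralRadius, spectralRadius, hspec]

/-- If `S = TW` with `W` unitary and `T = U - V` is a proper splitting of `T`, then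
`S = UW - VW` is a proper splitting of `S`, `(UW)† = W* U†`, and the spectral radii of
the iteration operators agree. -/
theorem induced_splitting_unitary_right
    {H : Type*} [NormedAddCommGroup H] [InnerProductSpace ℂ H] [CompleteSpace H]
    (S T U V W Ud UWd : H →L[ℂ] H)
    (hTcr : IsClosed (LinearMap.range (T : H →ₗ[ℂ] H) : Set H))
    (hW1 : adjoint W ∘L W = 1) (hW2 : W ∘L adjoint W = 1)
    (hS : S = T ∘L W)
    (hsplit : T = U - V)
    (hran : LinearMap.range (U : H →ₗ[ℂ] H) = LinearMap.range (T : H →ₗ[ℂ] H))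
    (hker : LinearMap.ker (U : H →ₗ[ℂ] H) = LinearMap.ker (T : H →ₗ[ℂ] H))
    (hUd : IsMoorePenroseInverse U Ud)
    (hUWd : IsMoorePenroseInverse (U ∘L W) UWd) :
    (S = U ∘L W - V ∘L W ∧
        LinearMap.range ((U ∘L W : H →L[ℂ] H) : H →ₗ[ℂ] H) = LinearMap.range (S : H →ₗ[ℂ] H) ∧
        LinearMap.ker ((U ∘L W : H →L[ℂ] H) : H →ₗ[ℂ] H) = LinearMap.ker (S : H →ₗ[ℂ] H)) ∧
      UWd = adjoint W ∘L Ud ∧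
      spectralRadius ℂ (UWd ∘L (V ∘L W)) = spectralRadius ℂ (Ud ∘L V) :=
  induced_splitting_unitary_right_general S T U V W Ud UWd hW1 hW2 hS hsplit hran hker hUd hUWd
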